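/- arXiv:1309.4518 — 4 statements merged into one kernel-verified Lean document; each statement's English description precedes it below -/
import Mathlib

section
/- Let k ≥ 3, s ≥ k, and let χ : ([n] choose k-1) → [s-k+2] be any coloring of the (k-1)-subsets of [n] with s-k+2 colors. Define a k-uniform hypergraph G(χ) on vertex set [n] whose hyperedges are the k-sets e = {u_1 < u_2 < ... < u_k} with χ(e \ {u_k}) ≠ χ(e \ {u_{k-1}}). Then G(χ) contains no complete k-uniform hypergraph K_{s+1}^{(k)} on s+1 vertices. -/
/-- The edge predicate of the hypergraph `G(χ)`: a set `e` (of size `k` in context) is a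
hyperedge iff the color of `e` minus its largest element differs from the color of `e`
minus its second largest element. -/
def GchiEdge {n : ℕ} (χ : Finset (Fin n) → ℕ) (e : Finset (Fin n)) : Prop :=
  ∃ (h : e.Nonempty) (h2 : (e.erase (e.max' h)).Nonempty),
    χ (e.erase (e.max' h)) ≠ χ (e.erase ((e.erase (e.max' h)).max' h2))

/-- for `k ≥ 3`, `s ≥ k`, and any coloring `χ` of `(k-1)`-sets with
`s - k + 2` colors, the hypergraph `G(χ)` contains no `K_{s+1}^{(k)}`. -/
theorem stmt_3 (k s n : ℕ) (hk : 3 ≤ k) (hs : k ≤ s)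
    (χ : Finset (Fin n) → ℕ) (hχ : ∀ e : Finset (Fin n), χ e < s - k + 2) :
    ¬ ∃ S : Finset (Fin n), S.card = s + 1 ∧
      ∀ e ⊆ S, e.card = k → GchiEdge χ e := by
  rintro ⟨S, hcard, hedge⟩
  set f : Fin (s + 1) ↪o Fin n := S.orderEmbOfFin hcard with hf
  have hfm : ∀ i, f i ∈ S := fun i => S.orderEmbOfFin_mem hcard i
  have hc : k - 2 < s + 1 := by omega
  set B0 : Finset (Fin (s + 1)) := Finset.Iio ⟨k - 2, hc⟩ with hB0
  have hmemB0 : ∀ t : Fin (s + 1), t ∈ B0 ↔ (t : ℕ) < k - 2 := by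
    intro t; simp [hB0, Fin.lt_def]
  have hB0card : B0.card = k - 2 := by simp [hB0]
  -- pigeonhole
  have key : ∀ a b : Fin (s + 1), k - 2 ≤ (a : ℕ) → a < b →
      χ ((insert a B0).image f) = χ ((insert b B0).image f) → False := by
    intro a b ha hab hcol
    have hab' : (a : ℕ) < (b : ℕ) := hab
    have haB0 : a ∉ B0 := by rw [hmemB0]; omega
    have hbB0 : b ∉ B0 := by rw [hmemB0]; omega
    have hbI : b ∉ insert a B0 := by
      simp only [Finset.mem_insert, hmemB0]
      push_neg
      exact ⟨hab.ne', by omega⟩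
    set e0 : Finset (Fin (s + 1)) := insert b (insert a B0) with he0
    set e : Finset (Fin n) := e0.image f with he
    have hsub : e ⊆ S := by
      intro x hx
      obtain ⟨t, _, rfl⟩ := Finset.mem_image.mp hx
      exact hfm t
    have he0card : e0.card = k := by
      rw [he0, Finset.card_insert_of_notMem hbI, Finset.card_insert_of_notMem haB0, hB0card]
      omega
    have hecard : e.card = k := by
      rw [he, Finset.card_image_of_injective _ f.injective, he0card]
    obtain ⟨h1, h2, hne⟩ := hedge e hsub hecard
    have hle_b : ∀ t ∈ e0, t ≤ b := by
      intro t ht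
      rw [he0] at ht
      simp only [Finset.mem_insert] at ht
      rcases ht with rfl | rfl | ht
      · exact le_refl _
      · exact hab.le
      · rw [hmemB0] at ht
        rw [Fin.le_def]; omega
    have hmax : e.max' h1 = f b := by
      apply le_antisymm
      · apply Finset.max'_le
        intro y hy
        obtain ⟨t, ht, rfl⟩ := Finset.mem_image.mp hy
        exact f.monotone (hle_b t ht)
      · exact Finset.le_max' _ _ (Finset.mem_image_of_mem f (by simp [he0]))
    have hfab : f a ≠ f b := fun h => hab.ne (f.injective h)
    have hmax2 : (e.erase (e.max' h1)).max' h2 = f a := by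
      apply le_antisymm
      · apply Finset.max'_le
        intro y hy
        rw [Finset.mem_erase, hmax] at hy
        obtain ⟨hyne, hye⟩ := hy
        obtain ⟨t, ht, rfl⟩ := Finset.mem_image.mp hye
        apply f.monotone
        rw [he0] at ht
        simp only [Finset.mem_insert] at ht
        rcases ht with rfl | rfl | ht
        · exact absurd rfl hyne
        · exact le_refl _
        · rw [hmemB0] at ht
          rw [Fin.le_def]; omega
      · apply Finset.le_max'
        rw [Finset.mem_erase, hmax]
        exact ⟨hfab, Finset.mem_image_of_mem f (by simp [he0])⟩
    apply hne
    rw [hmax2, hmax]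
    have h3 : e.erase (f b) = (insert a B0).image f := by
      rw [he, ← Finset.image_erase f.injective, he0, Finset.erase_insert hbI]
    have h4 : e.erase (f a) = (insert b B0).image f := by
      rw [he, ← Finset.image_erase f.injective, he0,
        Finset.erase_insert_of_ne hab.ne', Finset.erase_insert haB0]
    rw [h3, h4]
    exact hcol
  -- apply pigeonhole
  have hlt : Fintype.card (Fin (s - k + 2)) < Fintype.card (Fin (s - k + 3)) := by simp
  obtain ⟨i, j, hij, hgij⟩ := Fintype.exists_ne_map_eq_of_card_lt
    (fun i : Fin (s - k + 3) =>
      (⟨χ ((insert ⟨k - 2 + (i : ℕ), by have := i.isLt; omega⟩ B0).image f), hχ _⟩ :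
        Fin (s - k + 2))) hlt
  simp only [Fin.mk.injEq] at hgij
  rcases lt_or_gt_of_ne hij with h | h
  · exact key _ _ (Nat.le_add_right _ _) (by rw [Fin.lt_def]; simpa using h) hgij
  · exact key _ _ (Nat.le_add_right _ _) (by rw [Fin.lt_def]; simpa using h) hgij.symm
end

section
/- Let G = (V, E) be a 3-uniform hypergraph on n vertices and let m ≥ 1 with n ≥ 2^{m²}. Then there exist distinct vertices v_1, ..., v_m, v_{m+1} such that for every pair 1 ≤ i < j ≤ m, either all triples {v_i, v_j, v_k} with j < k ≤ m+1 are hyperedges of G, or none of them is. -/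
/-!
Choose the vertices greedily, keeping a reservoir `S` of candidates for all later vertices.
When `x ∈ S` is chosen as `v t`, the rest of `S` splits into `2 ^ t` classes according to which
triples `{v i, x, w}` with `i < t` are hyperedges, and the largest class becomes the new
reservoir. As `2 ^ t * 2 ^ (m * (r - 1)) < 2 ^ (m * r)` for `t < m`, a reservoir of size
`2 ^ (m * r)` lasts for `r` more steps while `t + r ≤ m`; so `2 ^ (m ^ 2)` vertices give
`v 0, …, v (m - 1)` and a nonempty reservoir, from which `v m` is taken.
-/

open Finset Function

section Prehomogeneous

variable {α : Type*}

/-- `P a b c` stands for "`{a, b, c}` is a hyperedge"; only `v 0, …, v (t - 1)` have been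
chosen, the other values of `v` are irrelevant. -/
structure IsPrehomogeneous (P : α → α → α → Prop) (v : ℕ → α) (t : ℕ) (S : Finset α) :
    Prop where
  injOn : Set.InjOn v (Set.Iio t)
  notMem : ∀ i < t, v i ∉ S
  iff_of_mem : ∀ i j, i < j → j < t →
    ∀ w ∈ S, ∀ w' ∈ S, (P (v i) (v j) w ↔ P (v i) (v j) w')
  iff_of_lt : ∀ i j k, i < j → j < k → k < t → ∀ w ∈ S, (P (v i) (v j) (v k) ↔ P (v i) (v j) w)

variable {P : α → α → α → Prop} {v : ℕ → α} {t : ℕ} {S : Finset α} {x : α}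

lemma isPrehomogeneous_zero (P : α → α → α → Prop) (v : ℕ → α) (S : Finset α) :
    IsPrehomogeneous P v 0 S where
  injOn := by simp
  notMem := by simp
  iff_of_mem := by simp
  iff_of_lt := by simp

namespace IsPrehomogeneous

lemma injOn_update (hv : IsPrehomogeneous P v t S) (hx : x ∈ S) :
    Set.InjOn (update v t x) (Set.Iic t) := by
  have heq : Set.EqOn v (update v t x) (Set.Iio t) := fun i hi => (update_of_ne hi.ne _ _).symm
  rw [← Set.Iio_insert, Set.injOn_insert (show t ∉ Set.Iio t from lt_irrefl t)]
  refine ⟨hv.injOn.congr heq, ?_⟩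
  rintro ⟨i, hi, hix⟩
  rw [← heq hi, update_self] at hix
  exact hv.notMem i hi (hix ▸ hx)

lemma iff_update (hv : IsPrehomogeneous P v t S) (hx : x ∈ S) {i j k : ℕ} (hij : i < j)
    (hjk : j < k) (hkt : k ≤ t) :
    P (update v t x i) (update v t x j) (update v t x k) ↔ P (v i) (v j) x := by
  rw [update_of_ne (by omega), update_of_ne (by omega)]
  rcases hkt.lt_or_eq with hkt | rfl
  · rw [update_of_ne hkt.ne]
    exact hv.iff_of_lt i j k hij hjk hkt x hx
  · rw [update_self]

lemma exists_succ (hv : IsPrehomogeneous P v t S) {N : ℕ} (hS : 2 ^ t * N < #S) :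
    ∃ x S', IsPrehomogeneous P (update v t x) (t + 1) S' ∧ N ≤ #S' := by
  classical
  obtain ⟨x, hx⟩ : S.Nonempty := card_pos.1 (by omega)
  let link : α → Finset ℕ := fun w => (range t).filter fun i => P (v i) x w
  have hmaps : ∀ w ∈ S.erase x, link w ∈ (range t).powerset :=
    fun w _ => mem_powerset.2 (filter_subset _ _)
  have hcard : #(range t).powerset * N ≤ #(S.erase x) := by
    rw [card_powerset, card_range, card_erase_of_mem hx]
    omega
  obtain ⟨b, -, hb⟩ :=
    exists_le_card_fiber_of_mul_le_card_of_maps_to hmaps (powerset_nonempty _) hcard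
  set S' := (S.erase x).filter fun w => link w = b
  have hS'S : S' ⊆ S := (filter_subset _ _).trans (erase_subset _ _)
  have hxS' : x ∉ S' := fun h => notMem_erase x S (filter_subset _ _ h)
  have hlink : ∀ i < t, ∀ w ∈ S', ∀ w' ∈ S', (P (v i) x w ↔ P (v i) x w') := by
    intro i hi w hw w' hw'
    have hww' : link w = link w' := (mem_filter.1 hw).2.trans (mem_filter.1 hw').2.symm
    simpa [link, hi] using congrArg (i ∈ ·) hww'
  refine ⟨x, S', ⟨?_, ?_, ?_, ?_⟩, hb⟩
  · rw [Set.Iio_add_one_eq_Iic]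
    exact hv.injOn_update hx
  · intro i hi
    rcases Nat.lt_succ_iff_lt_or_eq.1 hi with hi | rfl
    · rw [update_of_ne hi.ne]
      exact fun h => hv.notMem i hi (hS'S h)
    · rwa [update_self]
  · intro i j hij hj w hw w' hw'
    rw [update_of_ne (by omega)]
    rcases Nat.lt_succ_iff_lt_or_eq.1 hj with hj | rfl
    · rw [update_of_ne hj.ne]
      exact hv.iff_of_mem i j hij hj w (hS'S hw) w' (hS'S hw')
    · rw [update_self]
      exact hlink i hij w hw w' hw'
  · intro i j k hij hjk hk w hw
    rw [hv.iff_update hx hij hjk (by omega), update_of_ne (by omega), update_of_ne (by omega)]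
    exact hv.iff_of_mem i j hij (by omega) x hx w (hS'S hw)

lemma exists_add {m r : ℕ} (hv : IsPrehomogeneous P v t S) (htr : t + r ≤ m)
    (hS : 2 ^ (m * r) ≤ #S) :
    ∃ v' S', IsPrehomogeneous P v' (t + r) S' ∧ S'.Nonempty := by
  induction r generalizing t v S with
  | zero => exact ⟨v, S, hv, card_pos.1 (by simpa using hS)⟩
  | succ r ih =>
    have hlt : 2 ^ t * 2 ^ (m * r) < #S := calc
      2 ^ t * 2 ^ (m * r) = 2 ^ (t + m * r) := (pow_add _ _ _).symm
      _ < 2 ^ (m * (r + 1)) := Nat.pow_lt_pow_right (by norm_num) (by rw [mul_add_one]; omega)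
      _ ≤ #S := hS
    obtain ⟨x, S', hv', hS'⟩ := hv.exists_succ hlt
    obtain ⟨v'', S'', hv'', hne⟩ := ih hv' (by omega) hS'
    exact ⟨v'', S'', (by omega : t + 1 + r = t + (r + 1)) ▸ hv'', hne⟩

end IsPrehomogeneous

end Prehomogeneous

theorem stmt_9_general (n m : ℕ) (hn : 2 ^ (m ^ 2) ≤ n)
    (E : Finset (Fin n) → Prop) :
    ∃ v : Fin (m + 1) → Fin n, Function.Injective v ∧
      ∀ i j : Fin (m + 1), i < j → (j : ℕ) < m →
        ((∀ k, j < k → E {v i, v j, v k}) ∨ (∀ k, j < k → ¬ E {v i, v j, v k})) := by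
  have hn0 : 0 < n := Nat.one_le_two_pow.trans hn
  obtain ⟨v, S, hv, x, hx⟩ :=
    (isPrehomogeneous_zero (fun a b c => E {a, b, c}) (fun _ => ⟨0, hn0⟩) univ).exists_add
      (zero_add m).le (by simpa [sq] using hn)
  rw [zero_add] at hv
  refine ⟨fun k => update v m x k, fun k l hkl => Fin.ext ?_, fun i j hij _ => ?_⟩
  · exact hv.injOn_update hx (Nat.lt_succ_iff.1 k.2) (Nat.lt_succ_iff.1 l.2) hkl
  · by_cases h : E {v i, v j, x}
    · exact .inl fun k hjk => (hv.iff_update hx hij hjk (Nat.lt_succ_iff.1 k.2)).2 h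
    · exact .inr fun k hjk => mt (hv.iff_update hx hij hjk (Nat.lt_succ_iff.1 k.2)).1 h

/-- Erdős–Rado pre-homogeneous sequence lemma for 3-graphs: if
`n ≥ 2^{m²}` with `m ≥ 1`, then any 3-uniform hypergraph on `Fin n` admits distinct
vertices `v 0, …, v m` such that for all indices `i < j` with `j` among the first `m`,
the triples `{v i, v j, v k}` for `k > j` are all hyperedges or all non-hyperedges. -/
theorem stmt_9 (n m : ℕ) (hm : 1 ≤ m) (hn : 2 ^ (m ^ 2) ≤ n)
    (E : Finset (Fin n) → Prop) :
    ∃ v : Fin (m + 1) → Fin n, Function.Injective v ∧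
      ∀ i j : Fin (m + 1), i < j → (j : ℕ) < m →
        ((∀ k, j < k → E {v i, v j, v k}) ∨ (∀ k, j < k → ¬ E {v i, v j, v k})) :=
  stmt_9_general n m hn E
end

section
/- Let G be a 3-uniform hypergraph on vertex set V, and let v_1, ..., v_m, v_{m+1} be distinct vertices such that for every pair 1 ≤ i < j ≤ m, the membership in E(G) of the triple {v_i, v_j, v_k} is the same for all k with j < k ≤ m+1. Define a graph H on {v_1, ..., v_m} where {v_i, v_j} (i < j) is an edge iff all triples {v_i, v_j, v_k} with j < k ≤ m+1 are hyperedges of G. If G is K_t^{(3)}-free (t ≥ 3), then H is K_{t-1}-free. -/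
/-- given a pre-homogeneous sequence `v 0, …, v m` in a `K_t^{(3)}`-free
3-graph `E`, the derived graph `H` on `{v 0, …, v (m-1)}` — with `i < j` adjacent iff
all triples `{v i, v j, v k}`, `k > j`, are hyperedges — is `K_{t-1}`-free. -/
theorem stmt_10 (n m t : ℕ) (ht : 3 ≤ t) (E : Finset (Fin n) → Prop)
    (v : Fin (m + 1) → Fin n) (hv : Function.Injective v)
    (hom : ∀ i j : Fin (m + 1), i < j → (j : ℕ) < m →
      ((∀ k, j < k → E {v i, v j, v k}) ∨ (∀ k, j < k → ¬ E {v i, v j, v k})))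
    (hfree : ¬ ∃ S : Finset (Fin n), S.card = t ∧
      ∀ e ⊆ S, e.card = 3 → E e) :
    ¬ ∃ I : Finset (Fin (m + 1)), (∀ i ∈ I, (i : ℕ) < m) ∧ I.card = t - 1 ∧
      ∀ i ∈ I, ∀ j ∈ I, i < j → ∀ k, j < k → E {v i, v j, v k} := by
  rintro ⟨I, hIm, hIcard, hclique⟩
  apply hfree
  set J : Finset (Fin (m + 1)) := insert (Fin.last m) I with hJ
  have hlast : Fin.last m ∉ I := by
    intro h
    have := hIm _ h
    simp [Fin.last] at this
  refine ⟨J.image v, ?_, ?_⟩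
  · rw [Finset.card_image_of_injective _ hv, hJ, Finset.card_insert_of_notMem hlast,
      hIcard]
    omega
  · -- key lemma: ordered triples from J are hyperedges
    have key : ∀ a b c : Fin (m + 1), a ∈ J → b ∈ J → c ∈ J → a < b → b < c →
        E {v a, v b, v c} := by
      intro a b c ha hb hc hab hbc
      have haI : a ∈ I := by
        rcases Finset.mem_insert.mp ha with h | h
        · exfalso
          have : b ≤ Fin.last m := Fin.le_last b
          rw [h] at hab; exact absurd (lt_of_lt_of_le hab this) (lt_irrefl _)
        · exact h
      have hbI : b ∈ I := by
        rcases Finset.mem_insert.mp hb with h | h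
        · exfalso
          have : c ≤ Fin.last m := Fin.le_last c
          rw [h] at hbc; exact absurd (lt_of_lt_of_le hbc this) (lt_irrefl _)
        · exact h
      exact hclique a haI b hbI hab c hbc
    intro e he hecard
    obtain ⟨f, hfJ, hfe⟩ := Finset.subset_image_iff.mp he
    have hfcard : f.card = 3 := by
      rw [← hecard, ← hfe]
      exact (Finset.card_image_of_injective f hv).symm
    obtain ⟨a, b, c, hab, hac, hbc, rfl⟩ := Finset.card_eq_three.mp hfcard
    have ha : a ∈ J := hfJ (by simp)
    have hb : b ∈ J := hfJ (by simp)
    have hc : c ∈ J := hfJ (by simp)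
    have himg : e = {v a, v b, v c} := by
      rw [← hfe]; simp [Finset.image_insert]
    rw [himg]
    have perm : ∀ x y z : Fin (m+1), ({v a, v b, v c} : Finset (Fin n)) = {v x, v y, v z} →
        x ∈ J → y ∈ J → z ∈ J → x < y → y < z → E {v a, v b, v c} := by
      intro x y z hEq hx hy hz hxy hyz
      rw [hEq]; exact key x y z hx hy hz hxy hyz
    rcases lt_trichotomy a b with h1 | h1 | h1
    · rcases lt_trichotomy b c with h2 | h2 | h2
      · exact key a b c ha hb hc h1 h2
      · exact absurd h2 hbc
      · rcases lt_trichotomy a c with h3 | h3 | h3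
        · exact perm a c b (by ext; simp; tauto) ha hc hb h3 h2
        · exact absurd h3 hac
        · exact perm c a b (by ext; simp; tauto) hc ha hb h3 h1
    · exact absurd h1 hab
    · rcases lt_trichotomy a c with h2 | h2 | h2
      · exact perm b a c (by ext; simp; tauto) hb ha hc h1 h2
      · exact absurd h2 hac
      · rcases lt_trichotomy b c with h3 | h3 | h3
        · exact perm b c a (by ext; simp; tauto) hb hc ha h3 h2
        · exact absurd h3 hbc
        · exact perm c b a (by ext; simp; tauto) hc hb ha h3 h1
end

section
/- With the setup of the derived graph H from a pre-homogeneous sequence v_1,...,v_{m+1} in a 3-uniform hypergraph G (as above): if W ⊆ {v_1, ..., v_m} contains no clique K_{s-1} in H (s ≥ 3), then the induced subhypergraph G[W] contains no K_s^{(3)}. -/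
/-- with the derived graph `H` from a pre-homogeneous sequence
`v 0, …, v m` in a 3-graph `E`, if a set `W` of indices (all among the first `m`)
spans no `K_{s-1}` in `H`, then the induced subhypergraph of `E` on `v '' W` contains
no `K_s^{(3)}`. -/
theorem stmt_11 (n m s : ℕ) (hs : 3 ≤ s) (E : Finset (Fin n) → Prop)
    (v : Fin (m + 1) → Fin n) (hv : Function.Injective v)
    (hom : ∀ i j : Fin (m + 1), i < j → (j : ℕ) < m →
      ((∀ k, j < k → E {v i, v j, v k}) ∨ (∀ k, j < k → ¬ E {v i, v j, v k})))
    (W : Finset (Fin (m + 1))) (hW : ∀ i ∈ W, (i : ℕ) < m)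
    (hnoclique : ¬ ∃ I ⊆ W, I.card = s - 1 ∧
      ∀ i ∈ I, ∀ j ∈ I, i < j → ∀ k, j < k → E {v i, v j, v k}) :
    ¬ ∃ T ⊆ W.image v, T.card = s ∧ ∀ e ⊆ T, e.card = 3 → E e := by
  rintro ⟨T, hTW, hTcard, hTE⟩
  obtain ⟨S, hSW, hST⟩ := Finset.subset_image_iff.mp hTW
  have hScard : S.card = s := by
    rw [← hTcard, ← hST, Finset.card_image_of_injective _ hv]
  have hSne : S.Nonempty := by
    rw [← Finset.card_pos, hScard]; omega
  set jm := S.max' hSne with hjm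
  have hjmS : jm ∈ S := S.max'_mem hSne
  refine hnoclique ⟨S.erase jm, ?_, ?_, ?_⟩
  · exact (S.erase_subset jm).trans hSW
  · rw [Finset.card_erase_of_mem hjmS, hScard]
  · intro i hi j hj hij k hjk
    have hjS : j ∈ S := Finset.mem_of_mem_erase hj
    have hjlt : j < jm := lt_of_le_of_ne (S.le_max' j hjS) (Finset.ne_of_mem_erase hj)
    have hjm' : (j : ℕ) < m := hW j (hSW hjS)
    rcases hom i j hij hjm' with h | h
    · exact h k hjk
    · exfalso
      apply h jm hjlt
      apply hTE
      · intro x hx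
        rw [← hST]
        simp only [Finset.mem_insert, Finset.mem_singleton] at hx
        rcases hx with rfl | rfl | rfl
        · exact Finset.mem_image_of_mem v (Finset.mem_of_mem_erase hi)
        · exact Finset.mem_image_of_mem v hjS
        · exact Finset.mem_image_of_mem v hjmS
      · have hij' : i < j := hij
        have h1 : v i ≠ v j := fun h => absurd (hv h) (ne_of_lt hij')
        have h2 : v i ≠ v jm := fun h => absurd (hv h) (ne_of_lt (hij'.trans hjlt))
        have h3 : v j ≠ v jm := fun h => absurd (hv h) (ne_of_lt hjlt)
        rw [Finset.card_insert_of_notMem (by simp [h1, h2]),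
          Finset.card_insert_of_notMem (by simp [h3]), Finset.card_singleton]
end
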